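/- Let p be a prime. The field ℚ_{tot,p} of totally p-adic algebraic numbers (the maximal algebraic extension of ℚ in which p is totally split, equivalently the intersection of all conjugates of ℚ_p ∩ ℚ̄ inside a fixed algebraic closure) is not Hilbertian. -/

import Mathlib

/-!
Put `γ(Y) = pY / (Y² + p)` and `f(X, Y) = X² + (Y² + p) X - p²Y²`, so that substituting
`X = (Y² + p) Z` turns `f` into `(Y² + p)² (Z² + Z - γ²)`. Since `‖r‖²` is never `‖p‖` for
`r ∈ ℚ_p`, one finds `‖γ(r)‖ < 1`, and Hensel's lemma gives `Z² + Z - γ(r)²` a root in `ℚ_p`.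
Hence for `y ∈ F` every conjugate of a root of `f(X, y)` lies in `ℚ_p`, that is, the root lies
in `F`, and no specialization of `f` is irreducible. On the other hand `f` has no root in
`F[Y]` (compare degrees and constant terms of a factorization), so by Gauss's lemma it is
irreducible over `F(Y)`.
-/

open Polynomial

/-- A field `F` is Hilbertian if for every polynomial `f(X, Y)` (a polynomial in `X`
over `F[Y]`) that is irreducible and separable in `X` over the rational function
field `F(Y)`, there exists `y ∈ F` such that the specialization `f(X, y)` is
irreducible over `F`. -/
def IsHilbertian (F : Type*) [Field F] : Prop :=
  ∀ f : Polynomial (Polynomial F),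
    Irreducible (f.map (algebraMap (Polynomial F) (RatFunc F))) →
    (f.map (algebraMap (Polynomial F) (RatFunc F))).Separable →
    ∃ y : F, Irreducible (f.map (Polynomial.evalRingHom y))

theorem degree_X_sq_add_C_mul_X_sub_C {R : Type*} [CommRing R] [Nontrivial R] (a b : R) :
    (X ^ 2 + C a * X - C b).degree = 2 := by
  compute_degree!

theorem IsAlgClosed.exists_sq_add_mul_sub_eq_zero {K : Type*} [Field K] [IsAlgClosed K]
    (a b : K) : ∃ x : K, x ^ 2 + a * x - b = 0 := by
  obtain ⟨x, hx⟩ := IsAlgClosed.exists_root (X ^ 2 + C a * X - C b)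
    (by simp [degree_X_sq_add_C_mul_X_sub_C])
  exact ⟨x, by simpa using hx⟩

theorem not_irreducible_of_sq_add_mul_sub_eq_zero {K : Type*} [Field K] {a b x : K}
    (hx : x ^ 2 + a * x - b = 0) : ¬Irreducible (X ^ 2 + C a * X - C b) := fun h ↦ by
  have hdeg := degree_eq_one_of_irreducible_of_root h (x := x) (by simpa using hx)
  rw [degree_X_sq_add_C_mul_X_sub_C] at hdeg
  exact absurd hdeg (by decide)

theorem mem_range_of_sq_add_mul_sub_eq_zero {K L : Type*} [Field K] [CommRing L] [IsDomain L]
    (i : K →+* L) {a b x₀ : K} (h₀ : x₀ ^ 2 + a * x₀ - b = 0) {x : L}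
    (hx : x ^ 2 + i a * x - i b = 0) : x ∈ i.range := by
  have h₀' : i x₀ ^ 2 + i a * i x₀ - i b = 0 := by simpa using congrArg i h₀
  have hroots : (x - i x₀) * (x - i (-a - x₀)) = 0 := by
    rw [map_sub, map_neg]
    linear_combination hx - h₀'
  rcases mul_eq_zero.mp hroots with h | h
  · exact ⟨x₀, (sub_eq_zero.mp h).symm⟩
  · exact ⟨-a - x₀, (sub_eq_zero.mp h).symm⟩

section QuadFamily

variable {K : Type*} [Field K]

/-- `X² + (Y² + q) X - q²Y²`, with the outer variable as `X` and the inner one as `Y`. -/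
noncomputable def quadFamily (q : K) : K[X][X] :=
  X ^ 2 + C (X ^ 2 + C q) * X - C (C (q ^ 2) * X ^ 2)

theorem monic_quadFamily (q : K) : (quadFamily q).Monic := by
  unfold quadFamily
  monicity!

theorem natDegree_quadFamily (q : K) : (quadFamily q).natDegree = 2 := by
  unfold quadFamily
  compute_degree!

theorem quadFamily_map_evalRingHom (q y : K) :
    (quadFamily q).map (evalRingHom y) = X ^ 2 + C (y ^ 2 + q) * X - C (q ^ 2 * y ^ 2) := by
  simp [quadFamily]

theorem mul_ne_of_add_eq_X_sq_add_C {q : K} (hq : q ≠ 0) (hq1 : q + 1 ≠ 0) {c₁ c₂ : K[X]}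
    (hadd : c₁ + c₂ = X ^ 2 + C q) : c₁ * c₂ ≠ -(C (q ^ 2) * X ^ 2) := by
  intro hmul
  have hconst : c₁.natDegree = 0 ∨ c₂.natDegree = 0 := by
    have hne : c₁ * c₂ ≠ 0 := by rw [hmul]; simp [hq]
    have hprod : c₁.natDegree + c₂.natDegree = 2 := by
      rw [← natDegree_mul (left_ne_zero_of_mul hne) (right_ne_zero_of_mul hne), hmul,
        natDegree_neg, natDegree_C_mul_X_pow 2 _ (pow_ne_zero 2 hq)]
    have hsum : 2 ≤ max c₁.natDegree c₂.natDegree := by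
      simpa [hadd, natDegree_X_pow_add_C] using natDegree_add_le c₁ c₂
    omega
  wlog hc₁ : c₁.natDegree = 0 generalizing c₁ c₂
  · exact this (add_comm c₁ c₂ ▸ hadd) (mul_comm c₁ c₂ ▸ hmul) hconst.symm
      (hconst.resolve_left hc₁)
  obtain ⟨c, rfl⟩ := natDegree_eq_zero.mp hc₁
  obtain rfl : c₂ = X ^ 2 + C (q - c) := by rw [C_sub]; linear_combination hadd
  have e₀ := congrArg (eval 0) hmul
  have e₁ := congrArg (eval 1) hmul
  simp only [eval_mul, eval_C, eval_add, eval_pow, eval_X, eval_neg] at e₀ e₁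
  obtain rfl : c = -q ^ 2 := by linear_combination e₁ - e₀
  exact mul_ne_zero (pow_ne_zero 3 hq) hq1 (by linear_combination -e₀)

theorem irreducible_quadFamily {q : K} (hq : q ≠ 0) (hq1 : q + 1 ≠ 0) :
    Irreducible (quadFamily q) := by
  by_contra h
  obtain ⟨c₁, c₂, hmul, hadd⟩ := ((monic_quadFamily q).not_irreducible_iff_exists_add_mul_eq_coeff
    (natDegree_quadFamily q)).mp h
  simp only [quadFamily, coeff_add, coeff_sub, coeff_X_pow, coeff_C_mul_X, coeff_C] at hmul hadd
  norm_num at hmul hadd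
  exact mul_ne_of_add_eq_X_sq_add_C hq hq1 hadd.symm (by rw [← hmul, C_pow])

theorem irreducible_map_ratFunc_quadFamily {q : K} (hq : q ≠ 0) (hq1 : q + 1 ≠ 0) :
    Irreducible ((quadFamily q).map (algebraMap K[X] (RatFunc K))) :=
  (monic_quadFamily q).irreducible_iff_irreducible_map_fraction_map.mp
    (irreducible_quadFamily hq hq1)

end QuadFamily

section Padic

variable {p : ℕ} [Fact p.Prime]

theorem PadicInt.exists_sq_add_self_eq {c : ℤ_[p]} (hc : ‖c‖ < 1) :
    ∃ z : ℤ_[p], z ^ 2 + z = c := by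
  have hnorm : ‖(X ^ 2 + X - C c : ℤ_[p][X]).eval 0‖ <
      ‖(derivative (X ^ 2 + X - C c : ℤ_[p][X])).eval 0‖ ^ 2 := by
    simpa using hc
  obtain ⟨z, hz, -⟩ := hensels_lemma hnorm
  exact ⟨z, by simpa [sub_eq_zero] using hz⟩

theorem Padic.exists_sq_add_self_eq {c : ℚ_[p]} (hc : ‖c‖ < 1) :
    ∃ z : ℚ_[p], z ^ 2 + z = c := by
  obtain ⟨z, hz⟩ := PadicInt.exists_sq_add_self_eq (c := ⟨c, hc.le⟩) hc
  exact ⟨z, by exact_mod_cast congrArg ((↑) : ℤ_[p] → ℚ_[p]) hz⟩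

theorem Padic.norm_sq_ne_norm_p (r : ℚ_[p]) : ‖r‖ ^ 2 ≠ ‖(p : ℚ_[p])‖ := by
  rcases eq_or_ne r 0 with rfl | hr
  · simpa [eq_comm] using (Fact.out : p.Prime).ne_zero
  have hp : (1 : ℝ) < p := by exact_mod_cast (Fact.out : p.Prime).one_lt
  rw [Padic.norm_p, Padic.norm_eq_zpow_neg_valuation hr, ← zpow_natCast, ← zpow_mul,
    ← zpow_neg_one]
  intro h
  have := zpow_right_injective₀ (by positivity) hp.ne' h
  omega

theorem Padic.norm_p_mul_lt_norm_sq_add_p (r : ℚ_[p]) : ‖(p : ℚ_[p]) * r‖ < ‖r ^ 2 + p‖ := by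
  have hp : (1 : ℝ) < p := by exact_mod_cast (Fact.out : p.Prime).one_lt
  rw [Padic.add_eq_max_of_ne (by simpa using Padic.norm_sq_ne_norm_p r), norm_mul, norm_pow,
    Padic.norm_p]
  rcases lt_or_ge ‖r‖ 1 with hr | hr
  · calc (p : ℝ)⁻¹ * ‖r‖ < (p : ℝ)⁻¹ := mul_lt_of_lt_one_right (by positivity) hr
      _ ≤ _ := le_max_right _ _
  · calc (p : ℝ)⁻¹ * ‖r‖ < ‖r‖ :=
          mul_lt_of_lt_one_left (by positivity) (inv_lt_one_of_one_lt₀ hp)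
      _ ≤ ‖r‖ ^ 2 := by nlinarith
      _ ≤ _ := le_max_left _ _

theorem Padic.exists_quadFamily_root (r : ℚ_[p]) :
    ∃ x : ℚ_[p], x ^ 2 + (r ^ 2 + p) * x - (p : ℚ_[p]) ^ 2 * r ^ 2 = 0 := by
  have hlt := Padic.norm_p_mul_lt_norm_sq_add_p r
  have hD : r ^ 2 + (p : ℚ_[p]) ≠ 0 := norm_pos_iff.mp ((norm_nonneg _).trans_lt hlt)
  obtain ⟨z, hz⟩ := Padic.exists_sq_add_self_eq (c := ((p : ℚ_[p]) * r / (r ^ 2 + (p : ℚ_[p]))) ^ 2) (by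
    rw [norm_pow, norm_div]
    exact pow_lt_one₀ (by positivity) ((div_lt_one (by positivity)).mpr hlt) two_ne_zero)
  refine ⟨(r ^ 2 + p) * z, ?_⟩
  field_simp at hz
  linear_combination hz

end Padic

theorem exists_quadFamily_root_of_totallyPadic {p : ℕ} [Fact p.Prime]
    {F : Subfield (AlgebraicClosure ℚ)}
    (hF : ∀ x : AlgebraicClosure ℚ, x ∈ F ↔
      ∀ σ : AlgebraicClosure ℚ →+* AlgebraicClosure ℚ_[p],
        ∃ r : ℚ_[p], σ x = algebraMap ℚ_[p] (AlgebraicClosure ℚ_[p]) r) (y : F) :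
    ∃ x : F, x ^ 2 + (y ^ 2 + p) * x - (p : F) ^ 2 * y ^ 2 = 0 := by
  obtain ⟨x, hx⟩ := IsAlgClosed.exists_sq_add_mul_sub_eq_zero
    ((y : AlgebraicClosure ℚ) ^ 2 + p) ((p : AlgebraicClosure ℚ) ^ 2 * y ^ 2)
  have hxF : x ∈ F := (hF x).mpr fun σ ↦ by
    obtain ⟨r, hr⟩ := (hF y).mp y.2 σ
    obtain ⟨x₀, h₀⟩ := Padic.exists_quadFamily_root r
    obtain ⟨z, hz⟩ := mem_range_of_sq_add_mul_sub_eq_zero (algebraMap ℚ_[p] _) h₀ (x := σ x)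
      (by simpa [hr] using congrArg σ hx)
    exact ⟨z, hz.symm⟩
  exact ⟨⟨x, hxF⟩, Subtype.ext (by simpa using hx)⟩

/-- For a prime `p`, the field `ℚ_{tot,p}` of totally `p`-adic algebraic
numbers (the elements of a fixed algebraic closure of `ℚ` whose image under every
embedding into an algebraic closure of `ℚ_p` lies in `ℚ_p`; equivalently, the
intersection of all conjugates of `ℚ_p ∩ ℚ̄`) is not Hilbertian. -/
theorem stmt_9 (p : ℕ) [Fact p.Prime] (F : Subfield (AlgebraicClosure ℚ))
    (hF : ∀ x : AlgebraicClosure ℚ, x ∈ F ↔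
      ∀ σ : AlgebraicClosure ℚ →+* AlgebraicClosure ℚ_[p],
        ∃ r : ℚ_[p], σ x = algebraMap ℚ_[p] (AlgebraicClosure ℚ_[p]) r) :
    ¬ IsHilbertian F := by
  intro hH
  have hp : (p : F) ≠ 0 := Nat.cast_ne_zero.mpr (Fact.out : p.Prime).ne_zero
  have hirr := irreducible_map_ratFunc_quadFamily hp (Nat.cast_add_one_ne_zero p)
  obtain ⟨y, hy⟩ := hH _ hirr hirr.separable
  obtain ⟨x, hx⟩ := exists_quadFamily_root_of_totallyPadic hF y
  rw [quadFamily_map_evalRingHom] at hy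
  exact not_irreducible_of_sq_add_mul_sub_eq_zero hx hy
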